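/- arXiv:2404.09429 — 5 statements merged into one kernel-verified Lean document; each statement's English description precedes it below -/
import Mathlib

section
/- A polynomial f over a commutative ring R is a non-zero-divisor in R[x] if and only if the content ideal c(f) (the ideal of R generated by the coefficients of f) is semiregular, i.e., c(f) contains a finitely generated ideal J with annihilator (0 :_R J) = 0. -/
/-- An ideal `I` is semiregular if it contains a finitely generated subideal `J`
with zero annihilator, i.e. `(0 :_R J) = 0`. -/
def IsSemiregular {R : Type*} [CommRing R] (I : Ideal R) : Prop :=
  ∃ J : Ideal R, J.FG ∧ J ≤ I ∧ ∀ r : R, (∀ a ∈ J, a * r = 0) → r = 0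

/-- A polynomial `f` over a commutative ring `R` is a non-zero-divisor in `R[x]`
iff its content ideal (the ideal generated by its coefficients) is semiregular. -/
theorem stmt_0 {R : Type*} [CommRing R] (f : Polynomial R) :
    f ∈ nonZeroDivisors (Polynomial R) ↔
      IsSemiregular (Ideal.span (Set.range f.coeff)) := by
  classical
  rw [Polynomial.mem_nonZeroDivisors_iff]
  constructor
  · intro h
    refine ⟨Ideal.span (↑(f.support.image f.coeff) : Set R), Submodule.fg_span
      (Set.toFinite _), Ideal.span_mono ?_, fun r hr => ?_⟩
    · rintro a ha
      rw [Finset.coe_image] at ha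
      obtain ⟨n, -, rfl⟩ := ha
      exact Set.mem_range_self n
    · apply h
      ext n
      simp only [Polynomial.coeff_smul, Polynomial.coeff_zero, smul_eq_mul]
      by_cases hn : n ∈ f.support
      · rw [mul_comm]
        exact hr _ (Ideal.subset_span (by rw [Finset.coe_image]; exact ⟨n, hn, rfl⟩))
      · simp [Polynomial.notMem_support_iff.1 hn]
  · rintro ⟨J, -, hJle, hJann⟩ r hrf
    apply hJann
    intro a haJ
    have : ∀ a ∈ Ideal.span (Set.range f.coeff), a * r = 0 := by
      intro a ha
      induction ha using Submodule.span_induction with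
      | mem x hx =>
        obtain ⟨n, rfl⟩ := hx
        have := congrArg (fun p => Polynomial.coeff p n) hrf
        simpa [mul_comm] using this
      | zero => simp
      | add x y _ _ hx hy => rw [add_mul, hx, hy, add_zero]
      | smul c x _ hx => rw [smul_eq_mul, mul_assoc, hx, mul_zero]
    exact this a (hJle haJ)
end

section
/- Let R be a commutative ring and p a prime ideal of R that is not semiregular. Then the total quotient ring T(R[x]/p[x]) of R[x]/p[x] ≅ (R/p)[x] is an integral domain; equivalently, the extension of p[x] to the total quotient ring T(R[x]) (localization of R[x] at its non-zero-divisors) is a prime ideal of T(R[x]). -/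
open Polynomial

namespace Polynomial

variable {R : Type*} [CommRing R]

theorem contentIdeal_le_of_mem_map_C {I : Ideal R} {f : R[X]} (hf : f ∈ I.map C) :
    f.contentIdeal ≤ I := by
  rw [contentIdeal_def, Ideal.span_le]
  rintro _ ha
  obtain ⟨n, -, rfl⟩ := mem_coeffs_iff.mp ha
  exact Ideal.mem_map_C_iff.mp hf n

theorem eq_zero_of_contentIdeal_mul_eq_zero {f : R[X]} (hf : f ∈ nonZeroDivisors R[X]) {r : R}
    (hr : ∀ a ∈ f.contentIdeal, a * r = 0) : r = 0 := by
  have hfr : f * C r = 0 := by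
    ext n
    simp [coeff_mul_C, hr _ (f.coeff_mem_contentIdeal n)]
  exact C_eq_zero.mp ((mem_nonZeroDivisors_iff.mp hf).1 _ hfr)

end Polynomial

theorem IsSemiregular.of_mem_nonZeroDivisors_of_mem_map_C {R : Type*} [CommRing R]
    {I : Ideal R} {f : R[X]} (hf : f ∈ nonZeroDivisors R[X]) (hfI : f ∈ I.map C) :
    IsSemiregular I :=
  ⟨f.contentIdeal, f.contentIdeal_FG, contentIdeal_le_of_mem_map_C hfI,
    fun _ ↦ eq_zero_of_contentIdeal_mul_eq_zero hf⟩

/-- If `p` is a non-semiregular prime of `R`, then the extension of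
`p[x] = p ⬝ R[x]` to the total quotient ring `T(R[x])` is a prime ideal. -/
theorem stmt_8 {R : Type*} [CommRing R] (p : Ideal R) (hp : p.IsPrime)
    (hns : ¬ IsSemiregular p) :
    (Ideal.map (algebraMap (Polynomial R) (FractionRing (Polynomial R)))
      (Ideal.map Polynomial.C p)).IsPrime := by
  refine IsLocalization.isPrime_of_isPrime_disjoint (nonZeroDivisors R[X]) _ _
    (Ideal.isPrime_map_C_of_isPrime (P := p)) ?_
  exact Set.disjoint_left.mpr fun f hf hfp ↦
    hns (IsSemiregular.of_mem_nonZeroDivisors_of_mem_map_C hf hfp)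
end

section
/- Let R be a commutative ring such that the total quotient ring T(R) is Noetherian. Then for every prime ideal p of R that is not semiregular, the localization R_p is a Noetherian ring. -/
theorem IsSemiregular.of_mem_nonZeroDivisors {R : Type*} [CommRing R] {I : Ideal R} {a : R}
    (haI : a ∈ I) (ha : a ∈ nonZeroDivisors R) : IsSemiregular I := by
  refine ⟨Ideal.span {a}, Submodule.fg_span_singleton a,
    (Ideal.span_singleton_le_iff_mem I).mpr haI, fun r hr => ?_⟩
  exact ha.2 r (mul_comm r a ▸ hr a (Ideal.mem_span_singleton_self a))

theorem nonZeroDivisors_le_primeCompl_of_not_isSemiregular {R : Type*} [CommRing R]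
    {p : Ideal R} [p.IsPrime] (hns : ¬ IsSemiregular p) : nonZeroDivisors R ≤ p.primeCompl :=
  fun _ ha hap => hns (.of_mem_nonZeroDivisors hap ha)

theorem IsLocalization.isNoetherianRing_of_submonoid_le {R : Type*} [CommRing R]
    {M N : Submonoid R} (h : M ≤ N) (S T : Type*) [CommRing S] [CommRing T] [Algebra R S]
    [Algebra R T] [IsLocalization M S] [IsLocalization N T] [IsNoetherianRing S] :
    IsNoetherianRing T := by
  let : Algebra S T := localizationAlgebraOfSubmonoidLe S T M N h
  have : IsScalarTower R S T := localization_isScalarTower_of_submonoid_le S T M N h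
  have := isLocalization_of_submonoid_le S T M N h
  exact isNoetherianRing (N.map (algebraMap R S)) T ‹_›

/-- If the total quotient ring `T(R)` is Noetherian, then for every
non-semiregular prime `p` of `R` the localization `R_p` is Noetherian. -/
theorem stmt_11 {R : Type*} [CommRing R] (hT : IsNoetherianRing (FractionRing R))
    (p : Ideal R) [hp : p.IsPrime] (hns : ¬ IsSemiregular p) :
    IsNoetherianRing (Localization.AtPrime p) :=
  IsLocalization.isNoetherianRing_of_submonoid_le
    (nonZeroDivisors_le_primeCompl_of_not_isSemiregular hns) (FractionRing R) _
end

section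
/- Let R be a commutative ring in which every finitely generated ideal consisting of zero-divisors has a nonzero annihilator (property A). Then the set of zero-divisors of R equals the union of the maximal non-semiregular ideals; consequently a prime ideal p is non-semiregular if and only if p consists of zero-divisors. -/
/-- Under property A, the set of zero-divisors is the union of the maximal
non-semiregular ideals, and a prime is non-semiregular iff it consists of
zero-divisors. -/
theorem stmt_14 {R : Type*} [CommRing R]
    (hA : ∀ I : Ideal R, I.FG → (↑I ⊆ {r : R | ∃ s : R, s ≠ 0 ∧ r * s = 0}) →
      ∃ s : R, s ≠ 0 ∧ ∀ a ∈ I, a * s = 0) :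
    ({r : R | ∃ s : R, s ≠ 0 ∧ r * s = 0} =
      ⋃ m ∈ {m : Ideal R | ¬ IsSemiregular m ∧
        ∀ I : Ideal R, ¬ IsSemiregular I → m ≤ I → I = m}, (m : Set R)) ∧
    ∀ p : Ideal R, p.IsPrime →
      (¬ IsSemiregular p ↔ (↑p ⊆ {r : R | ∃ s : R, s ≠ 0 ∧ r * s = 0})) := by
  set Z : Set R := {r : R | ∃ s : R, s ≠ 0 ∧ r * s = 0} with hZ
  -- key equivalence: an ideal is non-semiregular iff it consists of zero-divisors
  have key : ∀ I : Ideal R, ¬ IsSemiregular I ↔ (↑I ⊆ Z) := by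
    intro I
    constructor
    · intro hns r hr
      by_contra hc
      apply hns
      refine ⟨Ideal.span {r}, ⟨{r}, by simp⟩,
        Ideal.span_le.mpr (Set.singleton_subset_iff.mpr hr), ?_⟩
      intro t ht
      by_contra ht0
      exact hc ⟨t, ht0, ht r (Ideal.subset_span rfl)⟩
    · rintro hsub ⟨J, hJfg, hJle, hJann⟩
      obtain ⟨s, hs0, hs⟩ := hA J hJfg (fun x hx => hsub (hJle hx))
      exact hs0 (hJann s hs)
  -- every element of Z lies in a maximal non-semiregular ideal
  have exmax : ∀ r ∈ Z, ∃ m : Ideal R, (¬ IsSemiregular m ∧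
      ∀ I : Ideal R, ¬ IsSemiregular I → m ≤ I → I = m) ∧ r ∈ m := by
    intro r hr
    have hspan : (↑(Ideal.span {r}) : Set R) ⊆ Z := by
      intro x hx
      obtain ⟨c, rfl⟩ := Ideal.mem_span_singleton'.mp hx
      obtain ⟨s, hs0, hs⟩ := hr
      exact ⟨s, hs0, by rw [mul_assoc, hs, mul_zero]⟩
    obtain ⟨m, hlem, hm⟩ := zorn_le_nonempty₀ {I : Ideal R | (↑I : Set R) ⊆ Z}
      (fun c hcs hc y hy => by
        refine ⟨sSup c, ?_, fun z hz => le_sSup hz⟩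
        intro x hx
        obtain ⟨I, hIc, hxI⟩ := (Submodule.mem_sSup_of_directed ⟨y, hy⟩
          hc.directedOn).mp hx
        exact hcs hIc hxI)
      (Ideal.span {r}) hspan
    refine ⟨m, ⟨(key m).mpr hm.prop, fun I hI hmI => ?_⟩,
      hlem (Ideal.subset_span rfl)⟩
    exact le_antisymm (hm.le_of_ge ((key I).mp hI) hmI) hmI
  constructor
  · ext r
    simp only [Set.mem_iUnion, Set.mem_setOf_eq]
    constructor
    · intro hr
      obtain ⟨m, hm, hrm⟩ := exmax r hr
      exact ⟨m, hm, hrm⟩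
    · rintro ⟨m, hm, hrm⟩
      exact (key m).mp hm.1 hrm
  · intro p _
    exact key p
end

section
/- Let R be a commutative ring and let p be a prime ideal of R. Then p is non-semiregular in R if and only if the ideal p[x] of R[x] consists entirely of zero-divisors of R[x]. -/
/-- A prime `p` of `R` is non-semiregular iff `p[x]` consists entirely of
zero-divisors of `R[x]`. -/
theorem stmt_19 {R : Type*} [CommRing R] (p : Ideal R) (hp : p.IsPrime) :
    ¬ IsSemiregular p ↔
      ∀ f ∈ Ideal.map Polynomial.C p, f ∉ nonZeroDivisors (Polynomial R) := by
  classical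
  constructor
  · intro h f hf hnzd
    apply h
    refine ⟨Ideal.span ((f.support.image f.coeff : Finset R) : Set R),
      ⟨_, rfl⟩, ?_, ?_⟩
    · rw [Ideal.span_le]
      intro a ha
      simp only [Finset.coe_image, Set.mem_image, Finset.mem_coe] at ha
      obtain ⟨n, -, rfl⟩ := ha
      exact (Ideal.mem_map_C_iff.1 hf) n
    · intro r hr
      refine Polynomial.mem_nonZeroDivisors_iff.1 hnzd r ?_
      ext n
      simp only [Polynomial.coeff_smul, smul_eq_mul, Polynomial.coeff_zero]
      rw [mul_comm]
      by_cases hn : f.coeff n = 0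
      · simp [hn]
      · exact hr _ (Ideal.subset_span (by simp only [Finset.coe_image,
          Set.mem_image, Finset.mem_coe]; exact ⟨n, Polynomial.mem_support_iff.2 hn, rfl⟩))
  · rintro h ⟨J, hfg, hJp, hann⟩
    obtain ⟨n, g, hg⟩ := Submodule.fg_iff_exists_fin_generating_family.1 hfg
    set f : Polynomial R := ∑ i : Fin n, Polynomial.C (g i) * Polynomial.X ^ (i : ℕ) with hfdef
    have hcoeff : ∀ i : Fin n, f.coeff (i : ℕ) = g i := by
      intro i
      rw [hfdef, Polynomial.finset_sum_coeff]
      rw [Finset.sum_eq_single i]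
      · simp
      · intro j _ hji
        rw [Polynomial.coeff_C_mul, Polynomial.coeff_X_pow, if_neg, mul_zero]
        exact fun e => hji (Fin.ext e.symm)
      · simp
    refine h f ?_ ?_
    · rw [Ideal.mem_map_C_iff]
      intro m
      rw [hfdef, Polynomial.finset_sum_coeff]
      refine Ideal.sum_mem _ fun i _ => ?_
      rw [Polynomial.coeff_C_mul, Polynomial.coeff_X_pow]
      split
      · simpa using hJp (hg ▸ Ideal.subset_span ⟨i, rfl⟩)
      · simp
    · rw [Polynomial.mem_nonZeroDivisors_iff]
      intro r hr
      refine hann r fun a ha => ?_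
      have hgen : ∀ i : Fin n, g i * r = 0 := by
        intro i
        have := congrArg (fun q => Polynomial.coeff q (i : ℕ)) hr
        simpa [Polynomial.coeff_smul, hcoeff i, mul_comm] using this
      rw [← hg] at ha
      refine Submodule.span_induction ?_ ?_ ?_ ?_ ha
      · rintro a ⟨i, rfl⟩; exact hgen i
      · simp
      · intro a b _ _ h1 h2; rw [add_mul, h1, h2, add_zero]
      · intro c a _ h1; simp only [smul_eq_mul, mul_assoc, h1, mul_zero]
end
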